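/- Let n be a positive integer, H a complex Hilbert space, Σ ⊆ 𝔽ₙ⁺ a nonempty admissible set, and M : Σ → H a map. Then there exist a complex Hilbert space E, a linear isometry ι : H → E, and isometries W₁,…,Wₙ ∈ B(E) with pairwise orthogonal ranges (Wᵢ*Wᵢ = I and Wᵢ*Wⱼ = 0 for i ≠ j) such that ι(M(σ)) = W_σ(ι(M(g₀))) for every σ ∈ Σ — equivalently, there is a *-representation π of C*(S₁,…,Sₙ) on E ⊇ H with M(p) = π(p(S₁,…,Sₙ))M(g₀) for all p ∈ ℂΣ — if and only if K₃ = K₄. -/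

import Mathlib

/-!
Statement 5: vector-valued moment problem for *-representations of the
Cuntz–Toeplitz algebra, stated via isometries with pairwise orthogonal ranges.
-/

open scoped InnerProductSpace ComplexOrder ComplexInnerProductSpace Classical
open ContinuousLinearMap

noncomputable section

universe u

/-- Words in the free monoid `𝔽ₙ⁺` on `n` generators (the empty word is `g₀`). -/
abbrev Wd (n : ℕ) := List (Fin n)

/-- A set `Σ ⊆ 𝔽ₙ⁺` is admissible if `αβ ∈ Σ` implies `β ∈ Σ`. -/
def Adm {n : ℕ} (S : Set (Wd n)) : Prop := ∀ α β : Wd n, α ++ β ∈ S → β ∈ S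

/-- `σ ≤ α` : `σ` is a prefix of `α`, i.e. `α = στ` for some `τ`. -/
def pfx {n : ℕ} (σ α : Wd n) : Prop := ∃ τ : Wd n, α = σ ++ τ

/-- `α ∖ σ` : the unique `τ` with `α = στ` when `σ ≤ α`. -/
def wq {n : ℕ} (α σ : Wd n) : Wd n := α.drop σ.length

/-- `W_α = W_{i₁} ⋯ W_{i_k}` for a word `α = g_{i₁} ⋯ g_{i_k}`, `W_{g₀} = I`. -/
def wordOp {E : Type*} [NormedAddCommGroup E] [InnerProductSpace ℂ E]
    {n : ℕ} (T : Fin n → (E →L[ℂ] E)) (α : Wd n) : E →L[ℂ] E := (α.map T).prod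

variable {H : Type u} [NormedAddCommGroup H] [InnerProductSpace ℂ H] [CompleteSpace H]

/-- `K₃((α,β),(σ,γ)) = ⟨M(σγ), M(αβ)⟩` (inner product linear in its first argument). -/
def K3 {n : ℕ} (M : Wd n → H) (x y : Wd n × Wd n) : ℂ :=
  ⟪M (x.1 ++ x.2), M (y.1 ++ y.2)⟫_ℂ

/-- `K₄((α,β),(σ,γ)) = ⟨M((σ∖α)γ), M(β)⟩` if `α ≤ σ`, `⟨M(γ), M((α∖σ)β)⟩` if `σ < α`,
and `0` otherwise (inner product linear in its first argument). -/
def K4 {n : ℕ} (M : Wd n → H) (x y : Wd n × Wd n) : ℂ :=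
  if pfx x.1 y.1 then ⟪M x.2, M (wq y.1 x.1 ++ y.2)⟫_ℂ
  else if pfx y.1 x.1 then ⟪M (wq x.1 y.1 ++ x.2), M y.2⟫_ℂ
  else 0

/-- A dilation of `M : Σ → H` to a Hilbert space `E ⊇ H` carrying isometries
`W₁,…,Wₙ` with pairwise orthogonal ranges (equivalently, a *-representation of
`C*(S₁,…,Sₙ)`), with `ι(M(σ)) = W_σ(ι(M(g₀)))` for all `σ ∈ Σ`. -/
structure IsomRepVec (n : ℕ) (H : Type u) [NormedAddCommGroup H]
    [InnerProductSpace ℂ H] [CompleteSpace H] (S : Set (Wd n)) (M : Wd n → H) :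
    Type (u + 1) where
  E : Type u
  [instN : NormedAddCommGroup E]
  [instI : InnerProductSpace ℂ E]
  [instC : CompleteSpace E]
  ι : H →ₗᵢ[ℂ] E
  W : Fin n → (E →L[ℂ] E)
  isom : ∀ i, adjoint (W i) * W i = 1
  orth : ∀ i j, i ≠ j → adjoint (W i) * W j = 0
  moment : ∀ σ ∈ S, ι (M σ) = wordOp W σ (ι (M ([] : Wd n)))

/-!
Necessity: if the `Wᵢ` are isometries with orthogonal ranges, then `W_α* W_σ` equals `W_{σ∖α}`
when `α ≤ σ`, `W_{α∖σ}*` when `σ < α`, and `0` otherwise. Evaluating `⟪W_α ι M(β), W_σ ι M(γ)⟫`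
this way gives `K₃ = K₄`.

Sufficiency: `K₃ = K₄` at one-letter prefixes says that `⟪M(ib), M(ic)⟫ = ⟪M b, M c⟫` and that
`⟪M(ib), M(jc)⟫ = 0` for `i ≠ j`. Hence `M b ↦ M(ib)` extends to an isometry `Vᵢ` from the
closed span `Dᵢ` of `{M b : ib ∈ Σ}` into `H`, and the ranges of the `Vᵢ` are mutually
orthogonal. These partial isometries are dilated on the full Fock space `ℓ²(𝔽ₙ⁺, H)`, with `H`
embedded at the empty word: `Wᵢ` maps the vacuum component `h` to `Vᵢ Pᵢ h` and shifts everything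
else, including the defect `(1 - Pᵢ) h`, from `w` to `iw`. Then `Wᵢ M(b) = M(ib)`, and
induction on `σ` gives `ι M(σ) = W_σ ι M(g₀)`.
-/

section GramIsometry

open Submodule Finsupp

variable {𝕜 E F X : Type*} [RCLike 𝕜] [NormedAddCommGroup E] [InnerProductSpace 𝕜 E]
  [NormedAddCommGroup F] [InnerProductSpace 𝕜 F]

lemma norm_linearCombination_eq_of_inner_eq {u : X → E} {v : X → F}
    (huv : ∀ a b, ⟪v a, v b⟫_𝕜 = ⟪u a, u b⟫_𝕜) (c : X →₀ 𝕜) :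
    ‖linearCombination 𝕜 v c‖ = ‖linearCombination 𝕜 u c‖ := by
  have hinner : ∀ d, ⟪linearCombination 𝕜 v c, linearCombination 𝕜 v d⟫_𝕜 =
      ⟪linearCombination 𝕜 u c, linearCombination 𝕜 u d⟫_𝕜 := fun d => by
    simp [linearCombination_apply, Finsupp.sum_inner, Finsupp.inner_sum, inner_smul_left,
      inner_smul_right, huv]
  rw [@norm_eq_sqrt_re_inner 𝕜, @norm_eq_sqrt_re_inner 𝕜, hinner]

theorem exists_linearIsometry_of_inner_eq [CompleteSpace F] (u : X → E) (v : X → F)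
    (huv : ∀ a b, ⟪v a, v b⟫_𝕜 = ⟪u a, u b⟫_𝕜) :
    ∃ V : (span 𝕜 (Set.range u)).topologicalClosure →ₗᵢ[𝕜] F,
      (∀ a, V ⟨u a, le_topologicalClosure _ (subset_span (Set.mem_range_self a))⟩ = v a) ∧
      ∀ x, V x ∈ (span 𝕜 (Set.range v)).topologicalClosure := by
  set D := (span 𝕜 (Set.range u)).topologicalClosure
  have hmem : ∀ c, linearCombination 𝕜 u c ∈ D := fun c =>
    le_topologicalClosure _ (by rw [← range_linearCombination]; exact LinearMap.mem_range_self _ c)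
  let e : (X →₀ 𝕜) →ₗ[𝕜] D := (linearCombination 𝕜 u).codRestrict D hmem
  have hnorm : ∀ c, ‖linearCombination 𝕜 v c‖ = ‖e c‖ :=
    norm_linearCombination_eq_of_inner_eq huv
  have hdense : DenseRange e := by
    rw [DenseRange, Subtype.dense_iff, ← Set.range_comp]
    show (D : Set E) ⊆ closure (Set.range (linearCombination 𝕜 u))
    rw [topologicalClosure_coe, ← LinearMap.coe_range, range_linearCombination]
  -- `extendOfNorm` factors `linearCombination 𝕜 v` through `e`, which the norm identity
  -- permits, and extends the result continuously to the closure `D`.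
  set V := (linearCombination 𝕜 v).extendOfNorm e
  have hVe : ∀ c, V (e c) = linearCombination 𝕜 v c :=
    LinearMap.extendOfNorm_eq hdense ⟨1, fun c => (one_mul ‖e c‖).symm ▸ (hnorm c).le⟩
  refine ⟨⟨V.toLinearMap, fun x => ?_⟩, fun a => ?_, fun x => ?_⟩
  · refine hdense.induction (fun _ ⟨c, hc⟩ => ?_) (isClosed_eq (by fun_prop) (by fun_prop)) x
    rw [← hc, ← hnorm]
    exact congrArg norm (hVe c)
  · have hea : e (single a 1) =
        ⟨u a, le_topologicalClosure _ (subset_span (Set.mem_range_self a))⟩ :=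
      Subtype.ext (by simp [e])
    rw [← hea]
    exact (hVe _).trans (by simp)
  · refine hdense.induction (fun _ ⟨c, hc⟩ => ?_)
      ((isClosed_topologicalClosure _).preimage V.continuous) x
    rw [← hc]
    show V (e c) ∈ _
    rw [hVe]
    exact le_topologicalClosure _ (by rw [← range_linearCombination]; exact ⟨c, rfl⟩)

end GramIsometry

theorem Submodule.IsOrtho.topologicalClosure {𝕜 E : Type*} [RCLike 𝕜] [NormedAddCommGroup E]
    [InnerProductSpace 𝕜 E] {U V : Submodule 𝕜 E} (h : U ⟂ V) :
    U.topologicalClosure ⟂ V.topologicalClosure := by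
  rw [Submodule.isOrtho_iff_le, Submodule.orthogonal_closure]
  exact U.topologicalClosure_minimal h.le (Submodule.isClosed_orthogonal _)

lemma ContinuousLinearMap.adjoint_comp_eq_zero_of_inner {𝕜 E F G : Type*} [RCLike 𝕜]
    [NormedAddCommGroup E] [InnerProductSpace 𝕜 E] [CompleteSpace E]
    [NormedAddCommGroup F] [InnerProductSpace 𝕜 F]
    [NormedAddCommGroup G] [InnerProductSpace 𝕜 G] [CompleteSpace G]
    {A : E →L[𝕜] G} {B : F →L[𝕜] G} (h : ∀ x y, ⟪A x, B y⟫_𝕜 = 0) : adjoint A ∘L B = 0 := by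
  ext y
  refine ext_inner_left 𝕜 fun x => ?_
  rw [comp_apply, adjoint_inner_right, h, zero_apply, inner_zero_right]

section ExtendByZero

open Function

variable {𝕜 E X Y : Type*} [RCLike 𝕜] [NormedAddCommGroup E] [InnerProductSpace 𝕜 E]
  {e : X → Y}

lemma inner_extend_zero_apply (he : Injective e) (f g : X → E) (y : Y) :
    ⟪extend e f 0 y, extend e g 0 y⟫_𝕜 = extend e (fun x => ⟪f x, g x⟫_𝕜) 0 y := by
  by_cases hy : ∃ x, e x = y
  · obtain ⟨x, rfl⟩ := hy
    simp only [he.extend_apply]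
  · simp only [extend_apply' _ _ _ hy, Pi.zero_apply, inner_zero_left]

variable (𝕜 E) in
def lp.extendByZero (he : Injective e) : lp (fun _ : X => E) 2 →ₗᵢ[𝕜] lp (fun _ : Y => E) 2 :=
  LinearMap.isometryOfInner
    { toFun := fun f => ⟨extend e f 0, by
        refine memℓp_gen ((summable_extend_zero he).mpr ((lp.memℓp f).summable (by norm_num))
          |>.congr fun y => ?_)
        rw [apply_extend (‖·‖ ^ ENNReal.toReal 2)]
        simp [Function.comp_def, Pi.zero_def]⟩
      map_add' := fun f g => lp.ext <| by
        simpa only [lp.coeFn_add, add_zero] using extend_add e (f : X → E) g 0 0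
      map_smul' := fun c f => lp.ext <| by
        simpa using extend_smul c e (f : X → E) 0 }
    fun f g => by
      simp only [LinearMap.coe_mk, AddHom.coe_mk, lp.inner_eq_tsum]
      simp only [inner_extend_zero_apply he, tsum_extend_zero he]

lemma lp.extendByZero_apply_of_notMem (he : Injective e) (f : lp (fun _ : X => E) 2) {y : Y}
    (hy : y ∉ Set.range e) : lp.extendByZero 𝕜 E he f y = 0 :=
  extend_apply' _ _ _ hy

lemma lp.inner_extendByZero_eq_zero {X' : Type*} {e' : X' → Y} (he : Injective e)
    (he' : Injective e') (h : Disjoint (Set.range e) (Set.range e'))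
    (f : lp (fun _ : X => E) 2) (g : lp (fun _ : X' => E) 2) :
    ⟪lp.extendByZero 𝕜 E he f, lp.extendByZero 𝕜 E he' g⟫_𝕜 = 0 := by
  rw [lp.inner_eq_tsum]
  refine (tsum_congr fun y => ?_).trans tsum_zero
  by_cases hy : y ∈ Set.range e
  · rw [lp.extendByZero_apply_of_notMem he' g (Set.disjoint_left.mp h hy), inner_zero_right]
  · rw [lp.extendByZero_apply_of_notMem he f hy, inner_zero_left]

end ExtendByZero

section CuntzDilation

variable {𝕜 κ G : Type*} [RCLike 𝕜] [NormedAddCommGroup G] [InnerProductSpace 𝕜 G]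

abbrev FockSpace (κ G : Type*) [NormedAddCommGroup G] : Type _ := lp (fun _ : List κ => G) 2

variable (𝕜) in
def fockShift (i : κ) : FockSpace κ G →ₗᵢ[𝕜] FockSpace κ G :=
  lp.extendByZero 𝕜 G (List.cons_injective (a := i))

lemma fockShift_apply_nil (i : κ) (F : FockSpace κ G) : fockShift 𝕜 i F [] = 0 :=
  lp.extendByZero_apply_of_notMem _ _ (by simp)

lemma inner_fockShift_fockShift_of_ne {i j : κ} (hij : i ≠ j) (F F' : FockSpace κ G) :
    ⟪fockShift 𝕜 i F, fockShift 𝕜 j F'⟫_𝕜 = 0 :=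
  lp.inner_extendByZero_eq_zero _ _ (Set.disjoint_left.mpr fun _ ⟨_, hw⟩ ⟨_, hw'⟩ =>
    hij (List.cons_eq_cons.mp (hw.trans hw'.symm)).1) F F'

variable [DecidableEq κ]

variable (𝕜 κ G) in
def fockVacuum : G →ₗᵢ[𝕜] FockSpace κ G :=
  { toLinearMap := lp.lsingle (𝕜 := 𝕜) (E := fun _ : List κ => G) 2 []
    norm_map' := lp.norm_single (E := fun _ : List κ => G) (by norm_num) [] }

lemma fockVacuum_apply_nil (a : G) : fockVacuum 𝕜 κ G a [] = a :=
  lp.single_apply_self _ _ _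

lemma inner_fockVacuum_left (a : G) (F : FockSpace κ G) :
    ⟪fockVacuum 𝕜 κ G a, F⟫_𝕜 = ⟪a, F []⟫_𝕜 :=
  lp.inner_single_left _ _ _

lemma inner_fockVacuum_right (a : G) (F : FockSpace κ G) :
    ⟪F, fockVacuum 𝕜 κ G a⟫_𝕜 = ⟪F [], a⟫_𝕜 :=
  lp.inner_single_right _ _ _

variable (D : κ → Submodule 𝕜 G) [∀ i, (D i).HasOrthogonalProjection]
  (V : ∀ i, D i →ₗᵢ[𝕜] G)

def cuntzDilation (i : κ) : FockSpace κ G →L[𝕜] FockSpace κ G :=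
  let Q := (D i).orthogonalProjectionOnto ∘L lp.evalCLM 𝕜 (fun _ : List κ => G) 2 []
  (fockVacuum 𝕜 κ G).toContinuousLinearMap ∘L (V i).toContinuousLinearMap ∘L Q +
    (fockShift 𝕜 i).toContinuousLinearMap ∘L
      (1 - (fockVacuum 𝕜 κ G).toContinuousLinearMap ∘L (D i).subtypeL ∘L Q)

lemma cuntzDilation_apply (i : κ) (F : FockSpace κ G) :
    cuntzDilation D V i F =
      fockVacuum 𝕜 κ G (V i ((D i).orthogonalProjectionOnto (F []))) +
        fockShift 𝕜 i (F - fockVacuum 𝕜 κ G ((D i).orthogonalProjectionOnto (F []))) :=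
  rfl

lemma cuntzDilation_fockVacuum (i : κ) (x : D i) :
    cuntzDilation D V i (fockVacuum 𝕜 κ G x) = fockVacuum 𝕜 κ G (V i x) := by
  rw [cuntzDilation_apply, fockVacuum_apply_nil,
    Submodule.orthogonalProjectionOnto_mem_subspace_eq_self, sub_self, map_zero, add_zero]

lemma inner_cuntzDilation_self (i : κ) (F F' : FockSpace κ G) :
    ⟪cuntzDilation D V i F, cuntzDilation D V i F'⟫_𝕜 = ⟪F, F'⟫_𝕜 := by
  simp only [cuntzDilation_apply, inner_add_left, inner_add_right, inner_fockVacuum_left,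
    inner_fockVacuum_right, fockShift_apply_nil, inner_zero_left, inner_zero_right,
    LinearIsometry.inner_map_map, inner_sub_left, inner_sub_right]
  set a := (D i).orthogonalProjectionOnto (F [])
  set b := (D i).orthogonalProjectionOnto (F' [])
  have hFb : ⟪F [], (b : G)⟫_𝕜 = ⟪a, b⟫_𝕜 :=
    (Submodule.inner_orthogonalProjectionOnto_eq_of_mem_right b _).symm
  have haF : ⟪(a : G), F' []⟫_𝕜 = ⟪a, b⟫_𝕜 :=
    (Submodule.inner_orthogonalProjectionOnto_eq_of_mem_left a _).symm
  rw [hFb, haF, ← Submodule.coe_inner]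
  ring

lemma inner_cuntzDilation_of_ne {i j : κ} (hij : i ≠ j) (hV : ∀ x y, ⟪V i x, V j y⟫_𝕜 = 0)
    (F F' : FockSpace κ G) :
    ⟪cuntzDilation D V i F, cuntzDilation D V j F'⟫_𝕜 = 0 := by
  simp only [cuntzDilation_apply, inner_add_left, inner_add_right, inner_fockVacuum_left,
    inner_fockVacuum_right, fockShift_apply_nil, inner_zero_left, inner_zero_right,
    LinearIsometry.inner_map_map, inner_fockShift_fockShift_of_ne hij, hV, add_zero]

end CuntzDilation

lemma pfx_iff_isPrefix {n : ℕ} {σ α : Wd n} : pfx σ α ↔ σ <+: α := by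
  simp only [pfx, List.IsPrefix, eq_comm]

lemma pfx.append_wq {n : ℕ} {σ α : Wd n} (h : pfx σ α) : σ ++ wq α σ = α :=
  List.prefix_iff_eq_append.mp (pfx_iff_isPrefix.mp h)

lemma Adm.wq_append_mem {n : ℕ} {S : Set (Wd n)} (hS : Adm S) {α σ γ : Wd n}
    (h : pfx α σ) (hσγ : σ ++ γ ∈ S) : wq σ α ++ γ ∈ S :=
  hS α _ (by rwa [← List.append_assoc, h.append_wq])

section WordOp

variable {E : Type*} [NormedAddCommGroup E] [InnerProductSpace ℂ E] {n : ℕ}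

lemma wordOp_cons (T : Fin n → (E →L[ℂ] E)) (i : Fin n) (α : Wd n) :
    wordOp T (i :: α) = T i * wordOp T α := by
  simp [wordOp]

lemma wordOp_append (T : Fin n → (E →L[ℂ] E)) (α β : Wd n) :
    wordOp T (α ++ β) = wordOp T α * wordOp T β := by
  simp [wordOp]

lemma inner_wordOp_wordOp [CompleteSpace E] {W : Fin n → (E →L[ℂ] E)}
    (hiso : ∀ i, adjoint (W i) * W i = 1) (horth : ∀ i j, i ≠ j → adjoint (W i) * W j = 0) (α σ : Wd n) (u v : E) :
    ⟪wordOp W α u, wordOp W σ v⟫_ℂ =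
      if pfx α σ then ⟪u, wordOp W (wq σ α) v⟫_ℂ
      else if pfx σ α then ⟪wordOp W (wq α σ) u, v⟫_ℂ else 0 := by
  induction α generalizing σ with
  | nil => simp [pfx_iff_isPrefix, wq, wordOp]
  | cons i α ih =>
    cases σ with
    | nil => simp [pfx_iff_isPrefix, wq, wordOp]
    | cons j σ =>
      have hcons : ⟪wordOp W (i :: α) u, wordOp W (j :: σ) v⟫_ℂ =
          ⟪wordOp W α u, (adjoint (W i) * W j) (wordOp W σ v)⟫_ℂ := by
        rw [wordOp_cons, wordOp_cons, mul_apply_eq_comp, mul_apply_eq_comp, mul_apply_eq_comp,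
          adjoint_inner_right]
      rw [hcons]
      by_cases hij : i = j
      · subst hij
        simpa [hiso, pfx_iff_isPrefix, wq] using ih σ
      · simp [horth i j hij, pfx_iff_isPrefix, hij, Ne.symm hij]

end WordOp

lemma inner_cons_cons_of_K3_eq_K4 {G : Type*} [NormedAddCommGroup G] [InnerProductSpace ℂ G]
    {n : ℕ} {S : Set (Wd n)} {M : Wd n → G}
    (hK : ∀ x y : {p : Wd n × Wd n // p.1 ++ p.2 ∈ S}, K3 M x.1 y.1 = K4 M x.1 y.1)
    {i j : Fin n} {b c : Wd n} (hb : i :: b ∈ S) (hc : j :: c ∈ S) :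
    ⟪M (i :: b), M (j :: c)⟫_ℂ = if i = j then ⟪M b, M c⟫_ℂ else 0 := by
  have := hK ⟨([i], b), hb⟩ ⟨([j], c), hc⟩
  by_cases hij : i = j
  · subst hij
    simpa [K3, K4, pfx_iff_isPrefix, wq] using this
  · simpa [K3, K4, pfx_iff_isPrefix, hij, Ne.symm hij] using this

attribute [instance] IsomRepVec.instN IsomRepVec.instI IsomRepVec.instC

variable {n : ℕ} {S : Set (Wd n)} {M : Wd n → H}

lemma IsomRepVec.moment_append (hS : Adm S) (R : IsomRepVec n H S M) {α β : Wd n}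
    (h : α ++ β ∈ S) :
    R.ι (M (α ++ β)) = wordOp R.W α (R.ι (M β)) := by
  rw [R.moment _ h, R.moment _ (hS α β h), wordOp_append, mul_apply_eq_comp]

theorem IsomRepVec.K3_eq_K4 (hS : Adm S) (R : IsomRepVec n H S M)
    (x y : {p : Wd n × Wd n // p.1 ++ p.2 ∈ S}) : K3 M x.1 y.1 = K4 M x.1 y.1 := by
  obtain ⟨⟨a, b⟩, hx⟩ := x
  obtain ⟨⟨c, d⟩, hy⟩ := y
  have hK3 : K3 M (a, b) (c, d) = ⟪wordOp R.W a (R.ι (M b)), wordOp R.W c (R.ι (M d))⟫_ℂ := by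
    rw [K3, ← R.moment_append hS hx, ← R.moment_append hS hy, R.ι.inner_map_map]
  rw [hK3, inner_wordOp_wordOp R.isom R.orth, K4]
  split_ifs with hac hca
  · rw [← R.moment_append hS (hS.wq_append_mem hac hy), R.ι.inner_map_map]
  · rw [← R.moment_append hS (hS.wq_append_mem hca hx), R.ι.inner_map_map]
  · rfl

theorem nonempty_isomRepVec_of_K3_eq_K4 (hS : Adm S)
    (hK : ∀ x y : {p : Wd n × Wd n // p.1 ++ p.2 ∈ S}, K3 M x.1 y.1 = K4 M x.1 y.1) :
    Nonempty (IsomRepVec n H S M) := by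
  choose V hV hVmem using fun i : Fin n =>
    exists_linearIsometry_of_inner_eq (𝕜 := ℂ) (fun b : {β // i :: β ∈ S} => M b)
      (fun b => M (i :: b)) fun b c => by simp [inner_cons_cons_of_K3_eq_K4 hK b.2 c.2]
  have hVorth : ∀ i j, i ≠ j → ∀ x y, ⟪V i x, V j y⟫_ℂ = 0 := by
    intro i j hij x y
    refine (Submodule.IsOrtho.topologicalClosure ?_).inner_eq (hVmem i x) (hVmem j y)
    rw [Submodule.isOrtho_span]
    rintro _ ⟨b, rfl⟩ _ ⟨c, rfl⟩
    simp [inner_cons_cons_of_K3_eq_K4 hK b.2 c.2, hij]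
  refine ⟨{ E := FockSpace (Fin n) H
            ι := fockVacuum ℂ (Fin n) H
            W := cuntzDilation _ V
            isom := fun i => (inner_map_map_iff_adjoint_comp_self _).mp
              (inner_cuntzDilation_self _ V i)
            orth := fun i j hij => adjoint_comp_eq_zero_of_inner
              (inner_cuntzDilation_of_ne _ V hij (hVorth i j hij))
            moment := fun σ hσ => ?_ }⟩
  induction σ with
  | nil => rfl
  | cons i β ih =>
    rw [wordOp_cons, mul_apply_eq_comp, ← ih (hS [i] β hσ), ← hV i ⟨β, hσ⟩]
    exact (cuntzDilation_fockVacuum _ V i _).symm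

theorem stmt5_general {n : ℕ} (S : Set (Wd n)) (hadm : Adm S)
    (M : Wd n → H) :
    Nonempty (IsomRepVec n H S M) ↔
      ∀ x y : {p : Wd n × Wd n // p.1 ++ p.2 ∈ S}, K3 M x.1 y.1 = K4 M x.1 y.1 :=
  ⟨fun ⟨R⟩ => R.K3_eq_K4 hadm, nonempty_isomRepVec_of_K3_eq_K4 hadm⟩

/-- There is a *-representation `π` of `C*(S₁,…,Sₙ)` on `E ⊇ H` with
`M(p) = π(p(S₁,…,Sₙ)) M(g₀)` for all `p ∈ ℂΣ` (stated via isometries with orthogonal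
ranges) iff `K₃ = K₄` on `Λ_Σ`. -/
theorem stmt5 {n : ℕ} (hn : 0 < n) (S : Set (Wd n)) (hne : S.Nonempty) (hadm : Adm S)
    (M : Wd n → H) :
    Nonempty (IsomRepVec n H S M) ↔
      ∀ x y : {p : Wd n × Wd n // p.1 ++ p.2 ∈ S}, K3 M x.1 y.1 = K4 M x.1 y.1 :=
  stmt5_general S hadm M
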